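/- arXiv:1907.12909 — 4 statements merged into one kernel-verified Lean document; each statement's English description precedes it below -/
import Mathlib

section
/- Let m be a positive integer and let c_1, c_2, ..., c_m be pairwise distinct positive integers with maximum c*. Then the sum over j of the ceiling of c_j/m is at most c*, i.e., ∑_{j=1}^{m} ⌈c_j/m⌉ ≤ c*. -/
/-!
Listing the `m` distinct values below `c*` in decreasing order, the `k`-th one is at most
`c* - k`, so by monotonicity of `x ↦ ⌈x / m⌉` the sum is at most `∑_{k<m} ⌈(c* - k) / m⌉`.
That sum equals `c*` (a form of Hermite's identity): raising `c*` by one shifts the window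
`c* - m < x ≤ c*` so that `x = c* + 1 - m` is replaced by `x + m`, whose term is one larger.
-/

open Finset

theorem Finset.sum_le_sum_range_sub {β : Type*} [AddCommMonoid β] [PartialOrder β]
    [IsOrderedAddMonoid β] {f : ℤ → β} (hf : Monotone f) (s : Finset ℤ)
    (N : ℤ) (hN : ∀ x ∈ s, x ≤ N) : ∑ x ∈ s, f x ≤ ∑ k ∈ range #s, f (N - k) := by
  induction s using Finset.induction_on_max generalizing N with
  | empty => simp
  | insert a s hlt ih =>
    have haN : a ≤ N := hN a (mem_insert_self a s)
    have hs : ∀ x ∈ s, x ≤ N - 1 := fun x hx => by linarith [hlt x hx]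
    have ha : a ∉ s := fun h => lt_irrefl a (hlt a h)
    calc ∑ x ∈ insert a s, f x = f a + ∑ x ∈ s, f x := sum_insert ha
      _ ≤ f N + ∑ k ∈ range #s, f (N - 1 - k) := add_le_add (hf haN) (ih (N - 1) hs)
      _ = ∑ k ∈ range #(insert a s), f (N - k) := by
        rw [card_insert_of_notMem ha, sum_range_succ', add_comm]
        simp only [Nat.cast_add, Nat.cast_one, Nat.cast_zero, sub_zero, sub_add_eq_sub_sub,
          sub_right_comm]

section Hermite

variable {K : Type*} [Field K] [LinearOrder K] [IsStrictOrderedRing K] [FloorRing K]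

theorem sum_range_ceil_sub_div_succ {m : ℕ} (hm : 0 < m) (N : ℤ) :
    ∑ k ∈ range m, ⌈((N + 1 - k : ℤ) : K) / m⌉ = ∑ k ∈ range m, ⌈((N - k : ℤ) : K) / m⌉ + 1 := by
  obtain ⟨n, rfl⟩ := Nat.exists_eq_add_one_of_ne_zero hm.ne'
  have hm' : ((n + 1 : ℕ) : K) ≠ 0 := by positivity
  have hlast : ⌈((N - n : ℤ) : K) / (n + 1 : ℕ)⌉ = ⌈((N + 1 : ℤ) : K) / (n + 1 : ℕ)⌉ - 1 := by
    rw [← Int.ceil_sub_one]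
    congr 1
    field_simp
    push_cast
    ring
  rw [sum_range_succ', sum_range_succ _ n, hlast]
  simp only [Nat.cast_add, Nat.cast_one, Nat.cast_zero, sub_zero, add_sub_add_right_eq_sub]
  ring

theorem sum_range_ceil_sub_div {m : ℕ} (hm : 0 < m) (N : ℤ) :
    ∑ k ∈ range m, ⌈((N - k : ℤ) : K) / m⌉ = N := by
  induction N using Int.induction_on with
  | zero =>
    refine (sum_eq_zero fun k hk => ?_).trans Int.cast_zero.symm
    have hkm : (k : K) < m := by exact_mod_cast mem_range.mp hk
    have hm' : (0 : K) < m := by exact_mod_cast hm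
    rw [Int.ceil_eq_iff]
    push_cast
    constructor
    · rw [lt_div_iff₀ hm']
      linarith
    · exact div_nonpos_of_nonpos_of_nonneg (by simp) hm'.le
  | succ N ih => rw [sum_range_ceil_sub_div_succ hm, ih]
  | pred N ih =>
    have h := sum_range_ceil_sub_div_succ (K := K) hm (-N - 1)
    rw [sub_add_cancel, ih] at h
    linarith

end Hermite

theorem stmt_0_general (m : ℕ) (hm : 0 < m) (c : Fin m → ℕ)
    (hinj : Function.Injective c)
    (cstar : ℕ) (hub : ∀ j, c j ≤ cstar) :
    (∑ j, ⌈(c j : ℚ) / m⌉) ≤ (cstar : ℤ) := by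
  let f : ℤ → ℤ := fun x => ⌈(x : ℚ) / m⌉
  have hf : Monotone f := fun x y hxy =>
    Int.ceil_mono (div_le_div_of_nonneg_right (Int.cast_le.mpr hxy) m.cast_nonneg)
  have hinj' : Function.Injective fun j => (c j : ℤ) := Nat.cast_injective.comp hinj
  let s := univ.image fun j => (c j : ℤ)
  have hcard : #s = m := by rw [card_image_of_injective _ hinj', card_univ, Fintype.card_fin]
  have hs : ∀ x ∈ s, x ≤ cstar := by simpa [s] using hub
  calc ∑ j, ⌈(c j : ℚ) / m⌉ = ∑ x ∈ s, f x := by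
        rw [sum_image fun i _ j _ h => hinj' h]
        simp only [f, Int.cast_natCast]
    _ ≤ ∑ k ∈ range m, f (cstar - k) := hcard ▸ sum_le_sum_range_sub hf s cstar hs
    _ = cstar := sum_range_ceil_sub_div hm cstar

/-- Let `m` be a positive integer and `c 1, ..., c m` pairwise distinct positive
integers with maximum `cstar`. Then `∑ j, ⌈c j / m⌉ ≤ cstar`. -/
theorem stmt_0 (m : ℕ) (hm : 0 < m) (c : Fin m → ℕ)
    (hpos : ∀ j, 0 < c j) (hinj : Function.Injective c)
    (cstar : ℕ) (hub : ∀ j, c j ≤ cstar) (hmem : ∃ j, c j = cstar) :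
    (∑ j, ⌈(c j : ℚ) / m⌉) ≤ (cstar : ℤ) :=
  stmt_0_general m hm c hinj cstar hub
end

section
/- Let m be a positive integer and let c_1, ..., c_m be pairwise distinct positive integers with maximum c*, and let C0 be a real number. Then (1/m) · ∑_{j=1}^{m} (C0 − m·⌈c_j/m⌉) ≥ C0 − c*. -/
/-!
Ceilings turn the bound into `∑ j ⌈c_j / m⌉ ≤ c*`. Since the `c_j` are distinct and at most `c*`,
the `k`-th largest of them is at most `c* - k`, so by monotonicity of `x ↦ ⌈x / m⌉` the sum is at
most `∑_{k<m} ⌈(c* - k) / m⌉`, which equals `c*` by Hermite's identity `∑_{k<m} ⌊(n + k) / m⌋ = n`.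
-/

open Finset

theorem Nat.sum_range_add_div {m : ℕ} (hm : 0 < m) (n : ℕ) :
    ∑ k ∈ range m, (n + k) / m = n := by
  induction n with
  | zero => exact sum_eq_zero fun k hk => Nat.div_eq_of_lt (by simpa using hk)
  | succ n ih =>
    -- split `∑_{k ≤ m} (n + k) / m` off at either end
    have shift := (sum_range_succ' (fun k => (n + k) / m) m).symm.trans
      (sum_range_succ (fun k => (n + k) / m) m)
    simp only [Nat.add_zero, ih, Nat.add_div_right n hm, ← Nat.add_assoc, Nat.add_right_comm n _ 1]
      at shift
    omega

theorem Nat.sum_range_sub_ceilDiv {m : ℕ} (hm : 0 < m) (n : ℕ) :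
    ∑ k ∈ range m, (n - k) ⌈/⌉ m = n := by
  calc ∑ k ∈ range m, (n - k) ⌈/⌉ m = ∑ k ∈ range m, (n + (m - 1 - k)) / m := by
        refine sum_congr rfl fun k hk => ?_
        have hk := mem_range.mp hk
        rw [ceilDiv_eq_add_pred_div]
        rcases le_or_gt k n with hkn | hnk
        · congr 1; omega
        · rw [Nat.div_eq_of_lt (by omega), Nat.div_eq_of_lt (by omega)]
    _ = n := by rw [sum_range_reflect (fun k => (n + k) / m) m, sum_range_add_div hm n]

theorem Finset.sum_le_sum_range_sub_of_monotone {M : Type*} [AddCommMonoid M] [PartialOrder M]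
    [IsOrderedAddMonoid M] {f : ℕ → M} (hf : Monotone f) (s : Finset ℕ) {n : ℕ}
    (hs : ∀ x ∈ s, x ≤ n) : ∑ x ∈ s, f x ≤ ∑ k ∈ range #s, f (n - k) := by
  induction s using Finset.induction_on_max generalizing n with
  | empty => simp
  | insert a s hlt ih =>
    have ha : a ∉ s := fun h => lt_irrefl a (hlt a h)
    have han : a ≤ n := hs a (mem_insert_self a s)
    rw [sum_insert ha, card_insert_of_notMem ha, sum_range_succ', add_comm]
    refine add_le_add ?_ (hf (by omega))
    simpa only [Nat.sub_sub, Nat.add_comm 1] using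
      ih (n := n - 1) fun x hx => by have := hlt x hx; omega

theorem Finset.sum_ceilDiv_card_le {s : Finset ℕ} {n : ℕ} (hs : ∀ x ∈ s, x ≤ n) :
    ∑ x ∈ s, x ⌈/⌉ #s ≤ n := by
  rcases s.eq_empty_or_nonempty with rfl | hne
  · simp
  calc ∑ x ∈ s, x ⌈/⌉ #s ≤ ∑ k ∈ range #s, (n - k) ⌈/⌉ #s :=
        sum_le_sum_range_sub_of_monotone (gc_mul_ceilDiv hne.card_pos).monotone_l s hs
    _ = n := Nat.sum_range_sub_ceilDiv hne.card_pos n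

theorem Int.ceil_natCast_div_natCast {K : Type*} [Field K] [LinearOrder K] [IsStrictOrderedRing K]
    [FloorRing K] (a b : ℕ) : ⌈(a : K) / b⌉ = ((a ⌈/⌉ b : ℕ) : ℤ) := by
  rcases b.eq_zero_or_pos with rfl | hb
  · simp
  rw [← Int.natCast_ceil_eq_ceil (by positivity)]
  congr 1
  refine eq_of_forall_ge_iff fun q => ?_
  rw [Nat.ceil_le, div_le_iff₀ (by positivity), ceilDiv_le_iff_le_mul hb, mul_comm]
  exact_mod_cast Iff.rfl

theorem stmt_1_general (m : ℕ) (hm : 0 < m) (c : Fin m → ℕ)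
    (hinj : Function.Injective c)
    (cstar : ℕ) (hub : ∀ j, c j ≤ cstar)
    (C0 : ℝ) :
    (1 / (m : ℝ)) * ∑ j, (C0 - (m : ℝ) * (⌈(c j : ℝ) / m⌉ : ℤ)) ≥ C0 - cstar := by
  have hsum : ∑ j, c j ⌈/⌉ m ≤ cstar := by
    have h := sum_ceilDiv_card_le (s := univ.image c) (n := cstar) (by simpa using hub)
    rwa [card_image_of_injective _ hinj, card_univ, Fintype.card_fin,
      sum_image fun i _ j _ hij => hinj hij] at h
  have hsumR : ∑ j, ((c j ⌈/⌉ m : ℕ) : ℝ) ≤ cstar := by exact_mod_cast hsum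
  have hmR : (m : ℝ) ≠ 0 := by positivity
  simp only [Int.ceil_natCast_div_natCast, Int.cast_natCast]
  rw [sum_sub_distrib, ← mul_sum, sum_const, card_univ, Fintype.card_fin, nsmul_eq_mul,
    ← mul_sub, ← mul_assoc, one_div_mul_cancel hmR, one_mul]
  linarith

/-- Lemma 1 (distilled): `(1/m) ∑ j (C0 - m ⌈c j / m⌉) ≥ C0 - cstar`. -/
theorem stmt_1 (m : ℕ) (hm : 0 < m) (c : Fin m → ℕ)
    (hpos : ∀ j, 0 < c j) (hinj : Function.Injective c)
    (cstar : ℕ) (hub : ∀ j, c j ≤ cstar) (hmem : ∃ j, c j = cstar)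
    (C0 : ℝ) :
    (1 / (m : ℝ)) * ∑ j, (C0 - (m : ℝ) * (⌈(c j : ℝ) / m⌉ : ℤ)) ≥ C0 - cstar :=
  stmt_1_general m hm c hinj cstar hub C0
end

section
/- For every pair of positive integers n and m there exists a feasible unit open shop schedule with n jobs and m machines (integer start times t(i,j), injective in j for each fixed i, injective in i for each fixed j) whose total sum of completion times equals ∑_{k=1}^{n} m·⌈k/m⌉, and moreover in this schedule machine 1's n operations occupy exactly the time slots 0, 1, ..., n−1 (machine 1 never idles) and job i completes at time C_i = m·⌈π(i)/m⌉ where π(i) is the position of job i's operation on machine 1. -/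
/-!
Number the jobs from `0` and cut them into blocks of `m` consecutive jobs. Job `i` of block
`q = i / m` runs on machine `j` at time `m q + (i + j) mod m`: within each block the pattern is a
cyclic Latin square, so no job and no machine is used twice in a slot, and all jobs of block `q`
finish at `m (q + 1)`. Machine `0` runs job `i` at time `i`, so `π(i) = i + 1` and
`m (q + 1) = m ⌈(i + 1) / m⌉`; summing over the jobs gives `∑_{k=1}^n m ⌈k / m⌉`.
-/

lemma Rat.ceil_natCast_succ_div_natCast {m : ℕ} (hm : 0 < m) (k : ℕ) :
    ⌈((k + 1 : ℕ) : ℚ) / m⌉ = (k / m + 1 : ℕ) := by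
  have lower : m * (k / m) ≤ k := Nat.mul_div_le k m
  have upper : k + 1 ≤ m * (k / m + 1) := Nat.lt_mul_div_succ k hm
  generalize k / m = q at *
  have hmQ : (0 : ℚ) < m := by exact_mod_cast hm
  have lowerQ : (m * q : ℚ) ≤ k := by exact_mod_cast lower
  have upperQ : (k + 1 : ℚ) ≤ m * (q + 1) := by exact_mod_cast upper
  rw [Int.ceil_eq_iff, lt_div_iff₀ hmQ, div_le_iff₀ hmQ]
  push_cast
  constructor <;> linarith

lemma Finset.sum_Icc_one_eq_sum_range {M : Type*} [AddCommMonoid M] (f : ℕ → M) (n : ℕ) :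
    ∑ k ∈ Finset.Icc 1 n, f k = ∑ k ∈ Finset.range n, f (k + 1) := by
  rw [Finset.range_eq_Ico, Finset.sum_Ico_add' f 0 n 1, Finset.Ico_add_one_right_eq_Icc, zero_add]

def blockSchedule (m i j : ℕ) : ℕ := m * (i / m) + (i + j) % m

section blockSchedule

variable {m : ℕ}

lemma blockSchedule_zero_right (i : ℕ) : blockSchedule m i 0 = i := by
  simp [blockSchedule, Nat.div_add_mod]

lemma blockSchedule_div (hm : 0 < m) (i j : ℕ) : blockSchedule m i j / m = i / m := by
  rw [blockSchedule, Nat.add_comm, Nat.add_mul_div_left _ _ hm,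
    Nat.div_eq_of_lt (Nat.mod_lt _ hm), zero_add]

lemma blockSchedule_modEq (i j : ℕ) : blockSchedule m i j ≡ i + j [MOD m] := by
  simp [blockSchedule, Nat.ModEq]

lemma blockSchedule_injOn_right (i : ℕ) : Set.InjOn (blockSchedule m i) (Set.Iio m) := by
  intro j₁ h₁ j₂ h₂ h
  have hmod := (blockSchedule_modEq i j₁).symm.trans (h ▸ blockSchedule_modEq i j₂)
  exact (hmod.add_left_cancel' i).eq_of_lt_of_lt h₁ h₂

lemma blockSchedule_injective_left (hm : 0 < m) (j : ℕ) :
    Function.Injective fun i => blockSchedule m i j := by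
  intro i₁ i₂ (h : blockSchedule m i₁ j = blockSchedule m i₂ j)
  refine Nat.ext_div_modEq (n := m) ?_ ?_
  · rw [← blockSchedule_div hm i₁ j, ← blockSchedule_div hm i₂ j, h]
  · exact ((blockSchedule_modEq i₁ j).symm.trans (h ▸ blockSchedule_modEq i₂ j)).add_right_cancel' j

lemma blockSchedule_lt (hm : 0 < m) (i j : ℕ) : blockSchedule m i j < m * (i / m + 1) := by
  have := Nat.mod_lt (i + j) hm
  rw [blockSchedule, Nat.mul_succ]
  omega

lemma sup_blockSchedule_add_one (hm : 0 < m) (i : ℕ) :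
    (Finset.univ.sup fun j : Fin m => blockSchedule m i j + 1) = m * (i / m + 1) := by
  refine le_antisymm (Finset.sup_le fun j _ => blockSchedule_lt hm i j) ?_
  have hi := Nat.div_add_mod i m
  have hr := Nat.mod_lt i hm
  -- the machine `m - 1 - i % m` is the one job `i` visits in the last slot of its block
  have hlast : (i + (m - 1 - i % m)) % m = m - 1 := by
    rw [show i + (m - 1 - i % m) = m - 1 + m * (i / m) by omega, Nat.add_mul_mod_self_left,
      Nat.mod_eq_of_lt (by omega)]
  refine le_trans (le_of_eq ?_) (Finset.le_sup (f := fun j : Fin m => blockSchedule m i j + 1)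
    (Finset.mem_univ ⟨m - 1 - i % m, by omega⟩))
  simp only [blockSchedule, hlast]
  rw [Nat.mul_succ]
  omega

end blockSchedule

theorem stmt_8_general (n m : ℕ) (hm : 0 < m) :
    ∃ t : Fin n → Fin m → ℕ,
      (∀ i, Function.Injective (t i)) ∧
      (∀ j, Function.Injective fun i => t i j) ∧
      (∀ i, t i ⟨0, hm⟩ < n) ∧
      (∀ i, ((Finset.univ.sup fun j => t i j + 1 : ℕ) : ℤ)
          = (m : ℤ) * ⌈((t i ⟨0, hm⟩ + 1 : ℕ) : ℚ) / m⌉) ∧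
      ((∑ i, (Finset.univ.sup fun j => t i j + 1) : ℕ) : ℤ)
          = ∑ k ∈ Finset.Icc 1 n, (m : ℤ) * ⌈(k : ℚ) / m⌉ := by
  have completion (k : ℕ) : ((m * (k / m + 1) : ℕ) : ℤ) = m * ⌈((k + 1 : ℕ) : ℚ) / m⌉ := by
    rw [Rat.ceil_natCast_succ_div_natCast hm]
    push_cast
    rfl
  refine ⟨fun i j => blockSchedule m i j, fun i => ?_, fun j => ?_, fun i => ?_, fun i => ?_, ?_⟩
  · exact fun j₁ j₂ h => Fin.ext (blockSchedule_injOn_right i j₁.isLt j₂.isLt h)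
  · exact (blockSchedule_injective_left hm j).comp Fin.val_injective
  · simp [blockSchedule_zero_right]
  · simp only [sup_blockSchedule_add_one hm, blockSchedule_zero_right, completion]
  · simp only [sup_blockSchedule_add_one hm, Finset.sum_Icc_one_eq_sum_range, Nat.cast_sum,
      completion]
    exact Fin.sum_univ_eq_sum_range (fun k => (m : ℤ) * ⌈((k + 1 : ℕ) : ℚ) / m⌉) n

/-- Existence of an optimal unit open shop schedule (Algorithm 1): a feasible
schedule whose total completion time equals `∑_{k=1}^n m ⌈k/m⌉`, in which
machine `1` occupies exactly the slots `0, ..., n-1` and each job `i` completes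
exactly at time `m ⌈π(i)/m⌉`, where `π(i) = t i 1 + 1` is the position of job
`i` on machine `1`. -/
theorem stmt_8 (n m : ℕ) (hn : 0 < n) (hm : 0 < m) :
    ∃ t : Fin n → Fin m → ℕ,
      (∀ i, Function.Injective (t i)) ∧
      (∀ j, Function.Injective fun i => t i j) ∧
      (∀ i, t i ⟨0, hm⟩ < n) ∧
      (∀ i, ((Finset.univ.sup fun j => t i j + 1 : ℕ) : ℤ)
          = (m : ℤ) * ⌈((t i ⟨0, hm⟩ + 1 : ℕ) : ℚ) / m⌉) ∧
      ((∑ i, (Finset.univ.sup fun j => t i j + 1) : ℕ) : ℤ)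
          = ∑ k ∈ Finset.Icc 1 n, (m : ℤ) * ⌈(k : ℚ) / m⌉ :=
  stmt_8_general n m hm
end

section
/- The three-player TU-game v on N = {1,2,3} defined by v(∅) = 0, v({1}) = 0, v({2}) = 3, v({3}) = 1, v({1,2}) = 3, v({1,3}) = 1, v({2,3}) = 3, v(N) = 3 has an empty core: there is no x ∈ ℝ³ with x₁ + x₂ + x₃ = 3, x₁ ≥ 0, x₂ ≥ 3, and x₃ ≥ 1. -/
open Finset

theorem not_exists_core_of_lt_sum_singleton {ι : Type*} [Fintype ι] [DecidableEq ι]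
    (v : Finset ι → ℝ) (h : v univ < ∑ i, v {i}) :
    ¬ ∃ x : ι → ℝ, ∑ i, x i = v univ ∧ ∀ S : Finset ι, v S ≤ ∑ i ∈ S, x i := by
  rintro ⟨x, heff, hcore⟩
  have hsingletons : ∑ i, v {i} ≤ ∑ i, x i :=
    sum_le_sum fun i _ => by simpa only [sum_singleton] using hcore {i}
  linarith

theorem stmt_11_general (v : Finset (Fin 3) → ℝ)
    (h1 : v {0} = 0) (h2 : v {1} = 3) (h3 : v {2} = 1)
    (hN : v Finset.univ = 3) :
    ¬ ∃ x : Fin 3 → ℝ,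
        (∑ i, x i) = v Finset.univ ∧ ∀ S : Finset (Fin 3), v S ≤ ∑ i ∈ S, x i := by
  apply not_exists_core_of_lt_sum_singleton
  rw [Fin.sum_univ_three, h1, h2, h3, hN]
  norm_num

/-- The three-player game with `v(∅)=0, v{1}=0, v{2}=3, v{3}=1, v{1,2}=3,
v{1,3}=1, v{2,3}=3, v(N)=3` has an empty core. -/
theorem stmt_11 (v : Finset (Fin 3) → ℝ)
    (h0 : v ∅ = 0) (h1 : v {0} = 0) (h2 : v {1} = 3) (h3 : v {2} = 1)
    (h12 : v {0, 1} = 3) (h13 : v {0, 2} = 1) (h23 : v {1, 2} = 3)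
    (hN : v Finset.univ = 3) :
    ¬ ∃ x : Fin 3 → ℝ,
        (∑ i, x i) = v Finset.univ ∧ ∀ S : Finset (Fin 3), v S ≤ ∑ i ∈ S, x i :=
  stmt_11_general v h1 h2 h3 hN
end
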